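/- Let X be a compact complex manifold of dimension n with Hermitian metric g, let C^{•,•} ⊆ Λ^{•,•}X be a finite-dimensional sub-complex closed under ∗̄_g, and let B^{•,•} ⊆ C^{•,•} be a further sub-complex closed under ∗̄_g. If the inclusion B^{•,•} ↪ Λ^{•,•}X induces an isomorphism in Bott-Chern cohomology, then the inclusion C^{•,•} ↪ Λ^{•,•}X also induces an isomorphism in Bott-Chern cohomology. -/

import Mathlib

/-!
Surjectivity is inherited from `B ⊆ C`. For injectivity put `T = ∂∂̄`: since `∂* = -∗̄∂∗̄` and
`∂̄* = -∗̄∂̄∗̄`, the adjoint `T* = ∂̄*∂*` maps `C^{p,q}` into `C^{p-1,q-1}`. If `x = T y ∈ C^{p,q}`,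
split `x = u + r` with `u` in the finite-dimensional space `T C^{p-1,q-1}` and `r ⊥ T C^{p-1,q-1}`.
Then `T* r ∈ C^{p-1,q-1}` is orthogonal to `C^{p-1,q-1}`, so `T* r = 0` and
`‖r‖² = ⟨T y - u, r⟩ = 0`, i.e. `x = u`.
-/

/-- The Bott-Chern Laplacian
`Δ̃^{BC} = (∂∂̄)(∂∂̄)* + (∂∂̄)*(∂∂̄) + (∂̄*∂)(∂̄*∂)* + (∂̄*∂)*(∂̄*∂) + ∂̄*∂̄ + ∂*∂`. -/
def BCLap {V : Type*} [AddCommGroup V] [Module ℂ V]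
    (d1 d2 d1s d2s : V →ₗ[ℂ] V) : V →ₗ[ℂ] V :=
  (d1 ∘ₗ d2) ∘ₗ (d2s ∘ₗ d1s) + (d2s ∘ₗ d1s) ∘ₗ (d1 ∘ₗ d2)
    + (d2s ∘ₗ d1) ∘ₗ (d1s ∘ₗ d2) + (d1s ∘ₗ d2) ∘ₗ (d2s ∘ₗ d1)
    + d2s ∘ₗ d2 + d1s ∘ₗ d1

theorem mem_map_of_mem_range_of_adjoint {𝕜 E F : Type*} [RCLike 𝕜]
    [NormedAddCommGroup E] [InnerProductSpace 𝕜 E] [NormedAddCommGroup F] [InnerProductSpace 𝕜 F]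
    {T : E →ₗ[𝕜] F} {Tadj : F →ₗ[𝕜] E} (hadj : ∀ a b, inner 𝕜 (T a) b = inner 𝕜 a (Tadj b))
    {W' : Submodule 𝕜 E} {W : Submodule 𝕜 F} [FiniteDimensional 𝕜 W']
    (hT : ∀ w ∈ W', T w ∈ W) (hTadj : ∀ x ∈ W, Tadj x ∈ W')
    {x : F} (hxW : x ∈ W) (hx : x ∈ LinearMap.range T) : x ∈ W'.map T := by
  obtain ⟨y, rfl⟩ := hx
  obtain ⟨u, ⟨w, hw, rfl⟩, r, hr, hdec⟩ := (W'.map T).exists_add_mem_mem_orthogonal (T y)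
  have hTadj_r : Tadj r ∈ W' := by
    rw [eq_sub_of_add_eq' hdec.symm, map_sub]
    exact sub_mem (hTadj _ hxW) (hTadj _ (hT w hw))
  have hTadj_r_zero : Tadj r = 0 := by
    rw [← inner_self_eq_zero (𝕜 := 𝕜), ← hadj]
    exact (Submodule.mem_orthogonal _ _).1 hr _ (Submodule.mem_map_of_mem hTadj_r)
  have hr_zero : r = 0 := by
    rw [← inner_self_eq_zero (𝕜 := 𝕜)]
    calc inner 𝕜 r r = inner 𝕜 (T (y - w)) r := by rw [map_sub, hdec, add_sub_cancel_left]
      _ = 0 := by rw [hadj, hTadj_r_zero, inner_zero_right]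
  rw [hdec, hr_zero, add_zero]
  exact Submodule.mem_map_of_mem hw

theorem mem_of_eq_neg_dual_comp_dual {V : Type*} [AddCommGroup V] [Module ℂ V]
    {C : ℤ → ℤ → Submodule ℂ V} {n a b : ℤ} {s d ds : V → V}
    (hs : ∀ p q : ℤ, ∀ x ∈ C p q, s x ∈ C (n - p) (n - q))
    (hd : ∀ p q : ℤ, ∀ x ∈ C p q, d x ∈ C (p + a) (q + b))
    (hds : ∀ x : V, ds x = -s (d (s x))) {p q : ℤ} {x : V} (hx : x ∈ C p q) :
    ds x ∈ C (p - a) (q - b) := by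
  have h := hs _ _ _ (hd _ _ _ (hs _ _ _ hx))
  rw [show n - (n - p + a) = p - a by ring, show n - (n - q + b) = q - b by ring] at h
  rw [hds]
  exact neg_mem h

theorem stmt_16_general {V : Type*} [NormedAddCommGroup V] [InnerProductSpace ℂ V] (n : ℤ)
    (A B C : ℤ → ℤ → Submodule ℂ V) (d1 d2 d1s d2s : V →ₗ[ℂ] V) (s : V → V)
    (hadj1 : ∀ x y : V, (inner ℂ (d1 x) y : ℂ) = inner ℂ x (d1s y))
    (hadj2 : ∀ x y : V, (inner ℂ (d2 x) y : ℂ) = inner ℂ x (d2s y))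
    (hd1s : ∀ x : V, d1s x = -(s (d1 (s x))))
    (hd2s : ∀ x : V, d2s x = -(s (d2 (s x))))
    -- `C` is a finite-dimensional sub-complex closed under `∗̄_g`
    (hC1 : ∀ p q : ℤ, ∀ x ∈ C p q, d1 x ∈ C (p + 1) q)
    (hC2 : ∀ p q : ℤ, ∀ x ∈ C p q, d2 x ∈ C p (q + 1))
    (hCfin : ∀ p q : ℤ, FiniteDimensional ℂ (C p q))
    (hCs : ∀ p q : ℤ, ∀ x ∈ C p q, s x ∈ C (n - p) (n - q))
    -- `B` is a further sub-complex of `C`, closed under `∗̄_g`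
    (hBC : ∀ p q : ℤ, B p q ≤ C p q)
    -- `B ↪ Λ^{•,•}X` induces an isomorphism in Bott-Chern cohomology
    (hB_surj : ∀ p q : ℤ, ∀ x ∈ A p q, d1 x = 0 → d2 x = 0 →
      ∃ b ∈ B p q, d1 b = 0 ∧ d2 b = 0 ∧ ∃ y ∈ A (p - 1) (q - 1), x - b = d1 (d2 y)) :
    -- conclusion: `C ↪ Λ^{•,•}X` induces an isomorphism in Bott-Chern cohomology
    (∀ p q : ℤ, ∀ x ∈ C p q, d1 x = 0 → d2 x = 0 →
      (∃ y ∈ A (p - 1) (q - 1), x = d1 (d2 y)) →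
      ∃ y' ∈ C (p - 1) (q - 1), x = d1 (d2 y')) ∧
    (∀ p q : ℤ, ∀ x ∈ A p q, d1 x = 0 → d2 x = 0 →
      ∃ c ∈ C p q, d1 c = 0 ∧ d2 c = 0 ∧ ∃ y ∈ A (p - 1) (q - 1), x - c = d1 (d2 y)) := by
  have hC_dd : ∀ p q : ℤ, ∀ y ∈ C (p - 1) (q - 1), d1 (d2 y) ∈ C p q := fun p q y hy => by
    simpa using hC1 _ _ _ (hC2 _ _ _ hy)
  have hC_dd_adj : ∀ p q : ℤ, ∀ x ∈ C p q, d2s (d1s x) ∈ C (p - 1) (q - 1) := fun p q x hx => by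
    have h1 := mem_of_eq_neg_dual_comp_dual (a := 1) (b := 0) hCs
      (fun p q x hx => by simpa using hC1 p q x hx) hd1s hx
    simpa using mem_of_eq_neg_dual_comp_dual (a := 0) (b := 1) hCs
      (fun p q x hx => by simpa using hC2 p q x hx) hd2s h1
  refine ⟨fun p q x hx _ _ ⟨y, _, hxy⟩ => ?_, fun p q x hx hx1 hx2 => ?_⟩
  · have := hCfin (p - 1) (q - 1)
    obtain ⟨y', hy', rfl⟩ := mem_map_of_mem_range_of_adjoint (T := d1 ∘ₗ d2)
      (Tadj := d2s ∘ₗ d1s) (fun a b => by simp only [LinearMap.comp_apply, hadj1, hadj2])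
      (hC_dd p q) (hC_dd_adj p q) hx ⟨y, hxy.symm⟩
    exact ⟨y', hy', rfl⟩
  · obtain ⟨b, hb, hb1, hb2, hxb⟩ := hB_surj p q x hx hx1 hx2
    exact ⟨b, hBC p q hb, hb1, hb2, hxb⟩

/-- Proposition subiso (Bott-Chern case): for a compact complex manifold `X` of complex
dimension `n` with Hermitian metric `g` — encoded through its Dolbeault double complex
`A^{•,•} = Λ^{•,•}X` with `L²` inner product, conjugate-linear Hodge star `s = ∗̄_g`, adjoints
`∂* = −∗̄∂∗̄`, `∂̄* = −∗̄∂̄∗̄`, and the elliptic decomposition `ker Δ̃^{BC} ⊕ im Δ̃^{BC}` —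
given finite-dimensional sub-complexes `B^{•,•} ⊆ C^{•,•} ⊆ Λ^{•,•}X` both closed under
`∗̄_g`, if `B ↪ Λ^{•,•}X` induces an isomorphism in Bott-Chern cohomology, then so does
`C ↪ Λ^{•,•}X`. -/
theorem stmt_16 {V : Type*} [NormedAddCommGroup V] [InnerProductSpace ℂ V] (n : ℤ)
    (A B C : ℤ → ℤ → Submodule ℂ V) (d1 d2 d1s d2s : V →ₗ[ℂ] V) (s : V → V)
    (hA1 : ∀ p q : ℤ, ∀ x ∈ A p q, d1 x ∈ A (p + 1) q)
    (hA2 : ∀ p q : ℤ, ∀ x ∈ A p q, d2 x ∈ A p (q + 1))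
    (hd1d1 : d1 ∘ₗ d1 = 0) (hd2d2 : d2 ∘ₗ d2 = 0)
    (hanti : d1 ∘ₗ d2 + d2 ∘ₗ d1 = 0)
    (hbounds : ∀ p q : ℤ, (p < 0 ∨ q < 0 ∨ n < p ∨ n < q) → A p q = ⊥)
    (horth : ∀ p q p' q' : ℤ, (p, q) ≠ (p', q') →
      ∀ x ∈ A p q, ∀ y ∈ A p' q', (inner ℂ x y : ℂ) = 0)
    (hs_add : ∀ x y : V, s (x + y) = s x + s y)
    (hs_smul : ∀ (c : ℂ) (x : V), s (c • x) = (starRingEnd ℂ) c • s x)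
    (hsgrad : ∀ p q : ℤ, ∀ x ∈ A p q, s x ∈ A (n - p) (n - q))
    (hadj1 : ∀ x y : V, (inner ℂ (d1 x) y : ℂ) = inner ℂ x (d1s y))
    (hadj2 : ∀ x y : V, (inner ℂ (d2 x) y : ℂ) = inner ℂ x (d2s y))
    (hd1s : ∀ x : V, d1s x = -(s (d1 (s x))))
    (hd2s : ∀ x : V, d2s x = -(s (d2 (s x))))
    (hdec : IsCompl (LinearMap.ker (BCLap d1 d2 d1s d2s))
      (LinearMap.range (BCLap d1 d2 d1s d2s)))
    -- `C` is a finite-dimensional sub-complex closed under `∗̄_g`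
    (hCA : ∀ p q : ℤ, C p q ≤ A p q)
    (hC1 : ∀ p q : ℤ, ∀ x ∈ C p q, d1 x ∈ C (p + 1) q)
    (hC2 : ∀ p q : ℤ, ∀ x ∈ C p q, d2 x ∈ C p (q + 1))
    (hCfin : ∀ p q : ℤ, FiniteDimensional ℂ (C p q))
    (hCs : ∀ p q : ℤ, ∀ x ∈ C p q, s x ∈ C (n - p) (n - q))
    -- `B` is a further sub-complex of `C`, closed under `∗̄_g`
    (hBC : ∀ p q : ℤ, B p q ≤ C p q)
    (hB1 : ∀ p q : ℤ, ∀ x ∈ B p q, d1 x ∈ B (p + 1) q)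
    (hB2 : ∀ p q : ℤ, ∀ x ∈ B p q, d2 x ∈ B p (q + 1))
    (hBfin : ∀ p q : ℤ, FiniteDimensional ℂ (B p q))
    (hBs : ∀ p q : ℤ, ∀ x ∈ B p q, s x ∈ B (n - p) (n - q))
    -- `B ↪ Λ^{•,•}X` induces an isomorphism in Bott-Chern cohomology
    (hB_inj : ∀ p q : ℤ, ∀ x ∈ B p q, d1 x = 0 → d2 x = 0 →
      (∃ y ∈ A (p - 1) (q - 1), x = d1 (d2 y)) →
      ∃ y' ∈ B (p - 1) (q - 1), x = d1 (d2 y'))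
    (hB_surj : ∀ p q : ℤ, ∀ x ∈ A p q, d1 x = 0 → d2 x = 0 →
      ∃ b ∈ B p q, d1 b = 0 ∧ d2 b = 0 ∧ ∃ y ∈ A (p - 1) (q - 1), x - b = d1 (d2 y)) :
    -- conclusion: `C ↪ Λ^{•,•}X` induces an isomorphism in Bott-Chern cohomology
    (∀ p q : ℤ, ∀ x ∈ C p q, d1 x = 0 → d2 x = 0 →
      (∃ y ∈ A (p - 1) (q - 1), x = d1 (d2 y)) →
      ∃ y' ∈ C (p - 1) (q - 1), x = d1 (d2 y')) ∧
    (∀ p q : ℤ, ∀ x ∈ A p q, d1 x = 0 → d2 x = 0 →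
      ∃ c ∈ C p q, d1 c = 0 ∧ d2 c = 0 ∧ ∃ y ∈ A (p - 1) (q - 1), x - c = d1 (d2 y)) :=
  stmt_16_general n A B C d1 d2 d1s d2s s hadj1 hadj2 hd1s hd2s hC1 hC2 hCfin hCs hBC hB_surj
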